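/- One-sided maximum principle: let 0 < α < 1, a < b, and φ a Schwartz function with (D_right)^α φ ≤ 0 on [a,b) and φ ≤ 0 on [b,∞). Then sup_{x > a} φ(x) = sup_{x > b} φ(x). -/

import Mathlib

open Real MeasureTheory

/-- The right fractional derivative of order `α`:
`(D_right)^α φ(x) = (1/Γ(-α)) ∫_x^∞ (φ(t) - φ(x))/(t-x)^{1+α} dt`. -/
noncomputable def Dright (α : ℝ) (φ : ℝ → ℝ) (x : ℝ) : ℝ :=
  (1 / Real.Gamma (-α)) * ∫ t in Set.Ioi x, (φ t - φ x) / (t - x) ^ (1 + α)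

/-!
If `φ` were positive somewhere in `(a, b)`, it would have a positive maximum on `[a, b]` at some
`x₀ < b`, and since `φ ≤ 0` beyond `b`, `φ(x₀)` dominates `φ` on all of `(x₀, ∞)`. The integrand of
`(D_right)^α φ(x₀)` is then nonpositive, and strictly negative beyond `b`, so the integral is
negative; as `Γ(-α) < 0` this makes `(D_right)^α φ(x₀) > 0`, contradicting the hypothesis. Hence
`φ ≤ 0` on `(a, ∞)` and on `(b, ∞)`, and since `φ` vanishes at infinity both suprema are `0`.
-/

open Set Filter Topology Function NNReal ENNReal

theorem Real.Gamma_neg_of_mem_Ioo {s : ℝ} (hs : s ∈ Ioo (-1) 0) : Gamma s < 0 := by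
  have hpos : 0 < Gamma (s + 1) := Gamma_pos_of_pos (by linarith [hs.1])
  rw [Gamma_add_one hs.2.ne] at hpos
  exact neg_of_mul_pos_right hpos hs.2.le

theorem SchwartzMap.lipschitzWith {E F : Type*} [NormedAddCommGroup E] [NormedSpace ℝ E]
    [NormedAddCommGroup F] [NormedSpace ℝ F] (f : SchwartzMap E F) :
    LipschitzWith (SchwartzMap.seminorm ℝ 0 1 f).toNNReal f := by
  refine lipschitzWith_of_nnnorm_fderiv_le (𝕜 := ℝ) f.differentiable fun x => ?_
  rw [← norm_toNNReal]
  gcongr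
  simpa using f.norm_iteratedFDeriv_le_seminorm ℝ 1 x

theorem integrableOn_Ioc_sub_rpow {p : ℝ} (hp : -1 < p) (x c : ℝ) :
    IntegrableOn (fun t => (t - x) ^ p) (Ioc x c) := by
  simpa using
    ((intervalIntegral.intervalIntegrable_rpow' hp (a := 0) (b := c - x)).comp_sub_right x).1

theorem integrableOn_Ioi_sub_rpow {p x c : ℝ} (hp : p < -1) (hc : x < c) :
    IntegrableOn (fun t => (t - x) ^ p) (Ioi c) := by
  have hpre : (fun t : ℝ => t - x) ⁻¹' Ioi (c - x) = Ioi c := by ext t; simp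
  have := ((measurePreserving_sub_right volume x).integrableOn_comp_preimage
    (MeasurableEquiv.subRight x).measurableEmbedding).mpr
    (integrableOn_Ioi_rpow_of_lt hp (sub_pos.mpr hc))
  rwa [hpre] at this

theorem integrableOn_Ioi_sub_div_rpow {φ : ℝ → ℝ} {K : ℝ≥0} {M α : ℝ} (hlip : LipschitzWith K φ)
    (hM : ∀ t, |φ t| ≤ M) (hα : 0 < α) (hα1 : α < 1) (x : ℝ) :
    IntegrableOn (fun t => (φ t - φ x) / (t - x) ^ (1 + α)) (Ioi x) := by
  have hcont : ContinuousOn (fun t => (φ t - φ x) / (t - x) ^ (1 + α)) (Ioi x) :=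
    (hlip.continuous.sub continuous_const).continuousOn.div
      ((continuous_sub_right x).continuousOn.rpow_const fun t ht => Or.inl (sub_pos.mpr ht).ne')
      fun t ht => (rpow_pos_of_pos (sub_pos.mpr ht) _).ne'
  have hnorm : ∀ t ∈ Ioi x,
      ‖(φ t - φ x) / (t - x) ^ (1 + α)‖ = |φ t - φ x| * (t - x) ^ (-(1 + α)) := by
    intro t ht
    rw [norm_div, norm_of_nonneg (rpow_nonneg (sub_pos.mpr ht).le _),
      rpow_neg (sub_pos.mpr ht).le, div_eq_mul_inv, norm_eq_abs]
  rw [← Ioc_union_Ioi_eq_Ioi (le_add_of_nonneg_right zero_le_one : x ≤ x + 1)]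
  refine IntegrableOn.union ?_ ?_
  · refine ((integrableOn_Ioc_sub_rpow (p := -α) (by linarith) x (x + 1)).const_mul K).mono'
      ((hcont.mono Ioc_subset_Ioi_self).aestronglyMeasurable measurableSet_Ioc)
      ((ae_restrict_iff' measurableSet_Ioc).mpr (ae_of_all _ fun t ht => ?_))
    have hpos : 0 < t - x := sub_pos.mpr ht.1
    have hdiff : |φ t - φ x| ≤ K * (t - x) := by
      simpa [dist_eq_norm, abs_of_pos hpos] using hlip.dist_le_mul t x
    calc ‖(φ t - φ x) / (t - x) ^ (1 + α)‖
        ≤ K * (t - x) * (t - x) ^ (-(1 + α)) := by rw [hnorm t ht.1]; gcongr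
      _ = K * (t - x) ^ (-α) := by
          rw [mul_assoc, ← rpow_one_add' hpos.le (by linarith)]; ring_nf
  · refine ((integrableOn_Ioi_sub_rpow (p := -(1 + α)) (by linarith)
      (lt_add_one x)).const_mul (M + M)).mono'
      ((hcont.mono (Ioi_subset_Ioi (le_add_of_nonneg_right zero_le_one))).aestronglyMeasurable
        measurableSet_Ioi)
      ((ae_restrict_iff' measurableSet_Ioi).mpr (ae_of_all _ fun t ht => ?_))
    rw [hnorm t ((lt_add_one x).trans ht)]
    exact mul_le_mul_of_nonneg_right ((abs_sub _ _).trans (add_le_add (hM t) (hM x)))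
      (rpow_nonneg (sub_pos.mpr ((lt_add_one x).trans ht)).le _)

theorem setIntegral_sub_div_rpow_neg_of_isMaxOn {φ : ℝ → ℝ} {x b α : ℝ}
    (hint : IntegrableOn (fun t => (φ t - φ x) / (t - x) ^ (1 + α)) (Ioi x))
    (hmax : IsMaxOn φ (Ioi x) x) (hlt : ∀ t ∈ Ioi b, φ t < φ x) :
    ∫ t in Ioi x, (φ t - φ x) / (t - x) ^ (1 + α) < 0 := by
  have hnonneg : 0 ≤ᵐ[volume.restrict (Ioi x)] fun t => -((φ t - φ x) / (t - x) ^ (1 + α)) :=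
    (ae_restrict_iff' measurableSet_Ioi).mpr (ae_of_all _ fun t ht => neg_nonneg.mpr
      (div_nonpos_of_nonpos_of_nonneg (sub_nonpos.mpr (hmax ht))
        (rpow_nonneg (sub_pos.mpr ht).le _)))
  have hsupp : Ioi (max x b) ⊆
      support (fun t => -((φ t - φ x) / (t - x) ^ (1 + α))) ∩ Ioi x := by
    intro t ht
    rw [mem_Ioi, max_lt_iff] at ht
    refine ⟨neg_ne_zero.mpr (div_neg_of_neg_of_pos ?_ ?_).ne, ht.1⟩
    · exact sub_neg.mpr (hlt t ht.2)
    · exact rpow_pos_of_pos (sub_pos.mpr ht.1) _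
  have hpos := (setIntegral_pos_iff_support_of_nonneg_ae hnonneg hint.neg).mpr
    ((by simp : (0 : ℝ≥0∞) < volume (Ioi (max x b))).trans_le (measure_mono hsupp))
  rw [integral_neg] at hpos
  linarith

theorem Dright_pos_of_isMaxOn {φ : ℝ → ℝ} {K : ℝ≥0} {M α x b : ℝ} (hlip : LipschitzWith K φ)
    (hM : ∀ t, |φ t| ≤ M) (hα : 0 < α) (hα1 : α < 1)
    (hmax : IsMaxOn φ (Ioi x) x) (hlt : ∀ t ∈ Ioi b, φ t < φ x) :
    0 < Dright α φ x :=
  mul_pos_of_neg_of_neg (one_div_neg.mpr (Gamma_neg_of_mem_Ioo ⟨by linarith, by linarith⟩))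
    (setIntegral_sub_div_rpow_neg_of_isMaxOn
      (integrableOn_Ioi_sub_div_rpow hlip hM hα hα1 x) hmax hlt)

theorem nonpos_of_Dright_nonpos {φ : ℝ → ℝ} {K : ℝ≥0} {M α a b : ℝ} (hlip : LipschitzWith K φ)
    (hM : ∀ t, |φ t| ≤ M) (hα : 0 < α) (hα1 : α < 1)
    (hf : ∀ x ∈ Ico a b, Dright α φ x ≤ 0) (hb : ∀ x, b ≤ x → φ x ≤ 0) :
    ∀ x ∈ Ioi a, φ x ≤ 0 := by
  by_contra! hcon
  obtain ⟨y, hya, hy⟩ := hcon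
  have hyb : y < b := lt_of_not_ge fun h => (hb y h).not_gt hy
  obtain ⟨x, hx, hmaxIcc⟩ := isCompact_Icc.exists_isMaxOn (nonempty_Icc.mpr (hya.le.trans hyb.le))
    hlip.continuous.continuousOn
  have hφx : 0 < φ x := hy.trans_le (hmaxIcc ⟨hya.le, hyb.le⟩)
  have hxb : x < b := lt_of_not_ge fun h => (hb x h).not_gt hφx
  have hmax : IsMaxOn φ (Ioi x) x := fun t ht =>
    (le_or_gt t b).elim (fun htb => hmaxIcc ⟨hx.1.trans ht.le, htb⟩)
      fun htb => (hb t htb.le).trans hφx.le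
  have hlt : ∀ t ∈ Ioi b, φ t < φ x := fun t ht => (hb t ht.le).trans_lt hφx
  exact (hf x ⟨hx.1, hxb⟩).not_gt (Dright_pos_of_isMaxOn hlip hM hα hα1 hmax hlt)

theorem iSup_Ioi_eq_zero_of_nonpos {f : ℝ → ℝ} {c : ℝ} (hf : Tendsto f atTop (𝓝 0))
    (h : ∀ x ∈ Ioi c, f x ≤ 0) : ⨆ x : Ioi c, f x = 0 := by
  have hbdd : BddAbove (range fun x : Ioi c => f x) := ⟨0, by rintro _ ⟨x, rfl⟩; exact h x x.2⟩
  refine le_antisymm (ciSup_le fun x => h x x.2) (le_of_tendsto hf ?_)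
  filter_upwards [eventually_gt_atTop c] with x hx
  exact le_ciSup hbdd ⟨x, hx⟩

theorem one_sided_maximum_principle_general (α : ℝ) (hα : 0 < α) (hα1 : α < 1)
    (a b : ℝ) (φ : SchwartzMap ℝ ℝ)
    (hf : ∀ x ∈ Set.Ico a b, Dright α (fun y => φ y) x ≤ 0)
    (hb : ∀ x, b ≤ x → φ x ≤ 0) :
    ⨆ x : Set.Ioi a, φ x = ⨆ x : Set.Ioi b, φ x := by
  have htendsto : Tendsto φ atTop (𝓝 0) := φ.tendsto_cocompact.mono_left atTop_le_cocompact
  have hnonpos := nonpos_of_Dright_nonpos φ.lipschitzWith (φ.norm_le_seminorm ℝ) hα hα1 hf hb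
  rw [iSup_Ioi_eq_zero_of_nonpos htendsto hnonpos,
    iSup_Ioi_eq_zero_of_nonpos htendsto fun x hx => hb x (le_of_lt hx)]

/-- One-sided maximum principle: the supremum over `(a,∞)` is attained on `(b,∞)`. -/
theorem one_sided_maximum_principle (α : ℝ) (hα : 0 < α) (hα1 : α < 1)
    (a b : ℝ) (hab : a < b) (φ : SchwartzMap ℝ ℝ)
    (hf : ∀ x ∈ Set.Ico a b, Dright α (fun y => φ y) x ≤ 0)
    (hb : ∀ x, b ≤ x → φ x ≤ 0) :
    ⨆ x : Set.Ioi a, φ x = ⨆ x : Set.Ioi b, φ x :=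
  one_sided_maximum_principle_general α hα hα1 a b φ hf hb
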